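/- Let p be a prime, let f = a_0 + ... + a_n x^n ∈ ℤ[x] be primitive with indices j, ℓ satisfying 1 ≤ ℓ+1 ≤ j ≤ n, p ∤ a_j, v_p(a_ℓ)/(j-ℓ) < v_p(a_i)/(j-i) for all i < j with i ≠ ℓ and a_i ≠ 0, and gcd(v_p(a_ℓ), j-ℓ) = 1. Furthermore suppose each coefficient satisfies a_0 ≥ a_1 ≥ ... ≥ a_n ≥ 1 and f has no zero on the unit circle. If j = n and ℓ = 0, then f is irreducible in ℤ[x]; in general, any factorization of f in ℤ[x] has a factor of degree at least j - ℓ. -/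

import Mathlib

/-!
Give `x` the `p`-adic valuation `w / k`, where `k = j - ℓ` and `w = v_p(a_ℓ)`: the monomial
`a_i x^i` gets the weight `k v_p(a_i) + w i`. The hypotheses say that the minimal weight of `f` is
`w j`, attained at `ℓ` and at `j`, and at no index left of `ℓ`. As in Gauss's lemma, minimal weights
add in a product `f = g h`, and the first (last) index of minimal weight of `g h` is the sum of the
first (last) such indices `m_g, m_h` (`M_g, M_h`) of the factors. Hence
`(M_g - m_g) + (M_h - m_h) ≥ j - ℓ = k`. Equal weights at `m_g` and `M_g` give `k ∣ w (M_g - m_g)`,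
so `k ∣ M_g - m_g` as `gcd(k, w) = 1`, and likewise for `h`: one of the two differences, and with it
the degree of that factor, is at least `k`.
-/

open Polynomial Finset

theorem Int.pow_dvd_mul_of_le_padicValInt_add {p : ℕ} [Fact p.Prime] {x y : ℤ} {t : ℕ}
    (h : t ≤ padicValInt p x + padicValInt p y) : (p : ℤ) ^ t ∣ x * y := by
  rcases eq_or_ne x 0 with rfl | hx
  · simp
  rcases eq_or_ne y 0 with rfl | hy
  · simp
  exact (pow_dvd_pow _ (h.trans_eq (padicValInt.mul hx hy).symm)).trans (padicValInt_dvd _)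

theorem Finset.exists_first_last_minimizer {α β : Type*} [LinearOrder α] [LinearOrder β]
    {s : Finset α} (hs : s.Nonempty) (φ : α → β) :
    ∃ m ∈ s, ∃ M ∈ s, m ≤ M ∧ φ M = φ m ∧ (∀ a ∈ s, φ m ≤ φ a) ∧
      (∀ a ∈ s, a < m → φ m < φ a) ∧ (∀ a ∈ s, M < a → φ m < φ a) := by
  obtain ⟨c, hc, hmin⟩ := s.exists_min_image φ hs
  set S := s.filter (φ · = φ c)
  have hS : S.Nonempty := ⟨c, mem_filter.mpr ⟨hc, rfl⟩⟩
  obtain ⟨hm, hφm⟩ := mem_filter.mp (S.min'_mem hS)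
  obtain ⟨hM, hφM⟩ := mem_filter.mp (S.max'_mem hS)
  have hlt : ∀ a ∈ s, a ∉ S → φ c < φ a := fun a ha haS =>
    (hmin a ha).lt_of_ne fun h => haS (mem_filter.mpr ⟨ha, h.symm⟩)
  refine ⟨_, hm, _, hM, S.min'_le _ (S.max'_mem hS), hφM.trans hφm.symm,
    fun a ha => hφm ▸ hmin a ha, fun a ha h => hφm ▸ hlt a ha fun haS => ?_,
    fun a ha h => hφm ▸ hlt a ha fun haS => ?_⟩
  · exact (S.min'_le a haS).not_gt h
  · exact (S.le_max' a haS).not_gt h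

namespace Polynomial

/-- With `k > 0`, the points `(i, v_p(g_i))` of the Newton diagram of `g` of equal weight lie on a
line of slope `-w/k`; a smaller weight means a lower line. -/
def newtonWeight (p k w : ℕ) (g : ℤ[X]) (i : ℕ) : ℕ := k * padicValInt p (g.coeff i) + w * i

variable {p k w : ℕ}

theorem newtonWeight_add_newtonWeight (g h : ℤ[X]) (a b : ℕ) :
    newtonWeight p k w g a + newtonWeight p k w h b =
      k * (padicValInt p (g.coeff a) + padicValInt p (h.coeff b)) + w * (a + b) := by
  unfold newtonWeight
  ring

theorem dvd_sub_of_newtonWeight_eq (hkw : k.Coprime w) {g : ℤ[X]} {m M : ℕ} (hmM : m ≤ M)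
    (h : newtonWeight p k w g M = newtonWeight p k w g m) : k ∣ M - m := by
  obtain ⟨d, rfl⟩ := Nat.exists_eq_add_of_le hmM
  rw [Nat.add_sub_cancel_left]
  unfold newtonWeight at h
  refine hkw.dvd_of_dvd_mul_left
    ((Nat.dvd_add_right (dvd_mul_right k (padicValInt p (g.coeff (m + d))))).mp ?_)
  exact ⟨padicValInt p (g.coeff m), by linarith [mul_add w m d]⟩

theorem mul_le_newtonWeight_of_dumas {f : ℤ[X]} {j ℓ : ℕ} (hℓj : ℓ < j)
    (h2 : ∀ i, i < j → i ≠ ℓ → f.coeff i ≠ 0 →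
      padicValInt p (f.coeff ℓ) * (j - i) < padicValInt p (f.coeff i) * (j - ℓ))
    {i : ℕ} (hi : f.coeff i ≠ 0) :
    padicValInt p (f.coeff ℓ) * j ≤ newtonWeight p (j - ℓ) (padicValInt p (f.coeff ℓ)) f i := by
  unfold newtonWeight
  rcases lt_or_ge i j with hij | hji
  · obtain ⟨d, rfl⟩ := Nat.exists_eq_add_of_lt hij
    rcases eq_or_ne i ℓ with rfl | hiℓ
    · rw [show i + d + 1 - i = d + 1 by omega]
      exact (by ring : _ = _).le
    · have := h2 i hij hiℓ hi
      rw [show i + d + 1 - i = d + 1 by omega] at this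
      nlinarith
  · nlinarith

variable [Fact p.Prime]

theorem pow_succ_dvd_coeff_mul_coeff {g h : ℤ[X]} {a b t : ℕ}
    (hlt : k * t + w * (a + b) < newtonWeight p k w g a + newtonWeight p k w h b) :
    (p : ℤ) ^ (t + 1) ∣ g.coeff a * h.coeff b := by
  apply Int.pow_dvd_mul_of_le_padicValInt_add
  unfold newtonWeight at hlt
  have : k * t < k * (padicValInt p (g.coeff a) + padicValInt p (h.coeff b)) := by
    rw [mul_add]
    linarith [mul_add w a b]
  exact Nat.lt_of_mul_lt_mul_left this

theorem lt_newtonWeight_coeff_mul {g h : ℤ[X]} {i N : ℕ}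
    (H : ∀ a b, a + b = i → g.coeff a ≠ 0 → h.coeff b ≠ 0 →
      N < newtonWeight p k w g a + newtonWeight p k w h b)
    (hi : (g * h).coeff i ≠ 0) : N < newtonWeight p k w (g * h) i := by
  by_contra! hle
  set t := padicValInt p ((g * h).coeff i)
  have hdvd : (p : ℤ) ^ (t + 1) ∣ (g * h).coeff i := by
    rw [coeff_mul]
    refine dvd_sum fun x hx => ?_
    have hxi : x.1 + x.2 = i := mem_antidiagonal.mp hx
    by_cases hx1 : g.coeff x.1 = 0
    · simp [hx1]
    by_cases hx2 : h.coeff x.2 = 0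
    · simp [hx2]
    refine pow_succ_dvd_coeff_mul_coeff (k := k) (w := w) ?_
    rw [hxi]
    exact hle.trans_lt (H _ _ hxi hx1 hx2)
  rcases (padicValInt_dvd_iff _ _).mp hdvd with h0 | h0
  · exact hi h0
  · omega

theorem coeff_mul_ne_zero_and_newtonWeight_le {g h : ℤ[X]} {a b : ℕ}
    (ha : g.coeff a ≠ 0) (hb : h.coeff b ≠ 0)
    (H : ∀ a' b', a' + b' = a + b → a' ≠ a → g.coeff a' ≠ 0 → h.coeff b' ≠ 0 →
      newtonWeight p k w g a + newtonWeight p k w h b <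
        newtonWeight p k w g a' + newtonWeight p k w h b') :
    (g * h).coeff (a + b) ≠ 0 ∧
      newtonWeight p k w (g * h) (a + b) ≤ newtonWeight p k w g a + newtonWeight p k w h b := by
  set s := padicValInt p (g.coeff a) + padicValInt p (h.coeff b)
  have hs : padicValInt p (g.coeff a * h.coeff b) = s := padicValInt.mul ha hb
  have hrest : (p : ℤ) ^ (s + 1) ∣
      ∑ x ∈ (antidiagonal (a + b)).erase (a, b), g.coeff x.1 * h.coeff x.2 := by
    refine dvd_sum fun x hx => ?_
    have hxab : x.1 + x.2 = a + b := mem_antidiagonal.mp (mem_of_mem_erase hx)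
    have hxa : x.1 ≠ a := fun hxa => ne_of_mem_erase hx (Prod.ext hxa (by omega))
    by_cases hx1 : g.coeff x.1 = 0
    · simp [hx1]
    by_cases hx2 : h.coeff x.2 = 0
    · simp [hx2]
    refine pow_succ_dvd_coeff_mul_coeff (k := k) (w := w) ?_
    rw [hxab, ← newtonWeight_add_newtonWeight]
    exact H _ _ hxab hxa hx1 hx2
  have hndvd : ¬ (p : ℤ) ^ (s + 1) ∣ (g * h).coeff (a + b) := by
    rw [coeff_mul, ← add_sum_erase _ (fun x => g.coeff x.1 * h.coeff x.2)
      (mem_antidiagonal.mpr rfl : (a, b) ∈ antidiagonal (a + b)), dvd_add_left hrest]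
    intro hdvd
    rcases (padicValInt_dvd_iff _ _).mp hdvd with h0 | h0
    · exact mul_ne_zero ha hb h0
    · exact absurd (h0.trans_eq hs) (by omega)
  have hne : (g * h).coeff (a + b) ≠ 0 := fun h0 => hndvd (h0 ▸ dvd_zero _)
  have hv : padicValInt p ((g * h).coeff (a + b)) ≤ s := by
    by_contra! hlt
    exact hndvd ((pow_dvd_pow _ hlt).trans (padicValInt_dvd _))
  refine ⟨hne, ?_⟩
  rw [newtonWeight_add_newtonWeight]
  exact Nat.add_le_add_right (Nat.mul_le_mul_left k hv) _

theorem exists_edges_of_mul {g h : ℤ[X]} (hg : g ≠ 0) (hh : h ≠ 0) {ℓ j L : ℕ}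
    (hmin : ∀ i, (g * h).coeff i ≠ 0 → L ≤ newtonWeight p k w (g * h) i)
    (hℓ : (g * h).coeff ℓ ≠ 0) (hℓL : newtonWeight p k w (g * h) ℓ ≤ L)
    (hj : (g * h).coeff j ≠ 0) (hjL : newtonWeight p k w (g * h) j ≤ L) :
    ∃ m₁ M₁ m₂ M₂, g.coeff M₁ ≠ 0 ∧ h.coeff M₂ ≠ 0 ∧ m₁ ≤ M₁ ∧ m₂ ≤ M₂ ∧
      newtonWeight p k w g M₁ = newtonWeight p k w g m₁ ∧
      newtonWeight p k w h M₂ = newtonWeight p k w h m₂ ∧ m₁ + m₂ ≤ ℓ ∧ j ≤ M₁ + M₂ := by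
  obtain ⟨m₁, hm₁, M₁, hM₁, hmM₁, hφ₁, hmin₁, hleft₁, hright₁⟩ :=
    exists_first_last_minimizer (nonempty_support_iff.mpr hg) (newtonWeight p k w g)
  obtain ⟨m₂, hm₂, M₂, hM₂, hmM₂, hφ₂, hmin₂, hleft₂, hright₂⟩ :=
    exists_first_last_minimizer (nonempty_support_iff.mpr hh) (newtonWeight p k w h)
  set N := newtonWeight p k w g m₁ + newtonWeight p k w h m₂
  have hlow : ∀ a b, a < m₁ ∨ b < m₂ → g.coeff a ≠ 0 → h.coeff b ≠ 0 →
      N < newtonWeight p k w g a + newtonWeight p k w h b := by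
    intro a b hab ha hb
    have ha := mem_support_iff.mpr ha
    have hb := mem_support_iff.mpr hb
    rcases hab with hab | hab
    · exact add_lt_add_of_lt_of_le (hleft₁ a ha hab) (hmin₂ b hb)
    · exact add_lt_add_of_le_of_lt (hmin₁ a ha) (hleft₂ b hb hab)
  have hhigh : ∀ a b, M₁ < a ∨ M₂ < b → g.coeff a ≠ 0 → h.coeff b ≠ 0 →
      N < newtonWeight p k w g a + newtonWeight p k w h b := by
    intro a b hab ha hb
    have ha := mem_support_iff.mpr ha
    have hb := mem_support_iff.mpr hb
    rcases hab with hab | hab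
    · exact add_lt_add_of_lt_of_le (hright₁ a ha hab) (hmin₂ b hb)
    · exact add_lt_add_of_le_of_lt (hmin₁ a ha) (hright₂ b hb hab)
  obtain ⟨hne, hle⟩ := coeff_mul_ne_zero_and_newtonWeight_le (mem_support_iff.mp hm₁)
    (mem_support_iff.mp hm₂) fun a b hab ha => hlow a b (by omega)
  have hLN : L ≤ N := (hmin _ hne).trans hle
  refine ⟨m₁, M₁, m₂, M₂, mem_support_iff.mp hM₁, mem_support_iff.mp hM₂, hmM₁, hmM₂, hφ₁, hφ₂,
    ?_, ?_⟩
  · by_contra! hlt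
    exact (lt_newtonWeight_coeff_mul (fun a b hab => hlow a b (by omega)) hℓ).not_ge
      (hℓL.trans hLN)
  · by_contra! hlt
    exact (lt_newtonWeight_coeff_mul (fun a b hab => hhigh a b (by omega)) hj).not_ge
      (hjL.trans hLN)

theorem le_natDegree_or_le_natDegree_of_dumas {f g h : ℤ[X]} (hfgh : f = g * h)
    {j ℓ : ℕ} (hℓj : ℓ < j) (h1 : ¬ (p : ℤ) ∣ f.coeff j)
    (h2 : ∀ i, i < j → i ≠ ℓ → f.coeff i ≠ 0 →
      padicValInt p (f.coeff ℓ) * (j - i) < padicValInt p (f.coeff i) * (j - ℓ))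
    (h3 : Nat.gcd (padicValInt p (f.coeff ℓ)) (j - ℓ) = 1) :
    j - ℓ ≤ g.natDegree ∨ j - ℓ ≤ h.natDegree := by
  have hj : f.coeff j ≠ 0 := fun h0 => h1 (h0 ▸ dvd_zero _)
  have hg : g ≠ 0 := by rintro rfl; simp [hfgh] at hj
  have hh : h ≠ 0 := by rintro rfl; simp [hfgh] at hj
  have hdeg : j ≤ g.natDegree + h.natDegree :=
    natDegree_mul hg hh ▸ hfgh ▸ le_natDegree_of_ne_zero hj
  rcases eq_or_ne (f.coeff ℓ) 0 with hℓ | hℓ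
  · -- `v_p(0) = 0`, so `h3` forces `j - ℓ = 1`.
    simp only [hℓ, padicValInt.zero, Nat.gcd_zero_left] at h3
    omega
  set w := padicValInt p (f.coeff ℓ)
  have hweight : ∀ i, i = ℓ ∨ i = j → newtonWeight p (j - ℓ) w f i ≤ w * j := by
    rintro i (rfl | rfl)
    · unfold newtonWeight
      rw [mul_comm, ← mul_add, Nat.sub_add_cancel hℓj.le]
    · unfold newtonWeight
      rw [padicValInt.eq_zero_of_not_dvd h1, mul_zero, zero_add]
  subst hfgh
  obtain ⟨m₁, M₁, m₂, M₂, hM₁, hM₂, hmM₁, hmM₂, hφ₁, hφ₂, hm, hM⟩ :=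
    exists_edges_of_mul hg hh (fun i hi => mul_le_newtonWeight_of_dumas hℓj h2 hi)
      hℓ (hweight ℓ (.inl rfl)) hj (hweight j (.inr rfl))
  have hkw : (j - ℓ).Coprime w := Nat.coprime_comm.mp h3
  have hd₁ := dvd_sub_of_newtonWeight_eq hkw hmM₁ hφ₁
  have hd₂ := dvd_sub_of_newtonWeight_eq hkw hmM₂ hφ₂
  have := le_natDegree_of_ne_zero hM₁
  have := le_natDegree_of_ne_zero hM₂
  rcases Nat.eq_zero_or_pos (M₁ - m₁) with h0 | hpos
  · exact .inr ((Nat.le_of_dvd (by omega) hd₂).trans (by omega))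
  · exact .inl ((Nat.le_of_dvd hpos hd₁).trans (by omega))

theorem IsPrimitive.isUnit_of_dvd_of_natDegree_eq_zero {R : Type*} [CommRing R] {f g : R[X]}
    (hf : f.IsPrimitive) (hgf : g ∣ f) (hg : g.natDegree = 0) : IsUnit g := by
  rw [eq_C_of_natDegree_eq_zero hg] at hgf ⊢
  exact (hf _ hgf).map C

theorem IsPrimitive.irreducible_of_forall_le_natDegree {R : Type*} [CommRing R] [IsDomain R]
    {f : R[X]} (hf : f.IsPrimitive) (hpos : 0 < f.natDegree)
    (H : ∀ g h : R[X], f = g * h → f.natDegree ≤ g.natDegree ∨ f.natDegree ≤ h.natDegree) :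
    Irreducible f where
  not_isUnit hu := hpos.ne' (natDegree_eq_zero_of_isUnit hu)
  isUnit_or_isUnit g h hgh := by
    have hg : g ≠ 0 := by rintro rfl; simp [hgh] at hpos
    have hh : h ≠ 0 := by rintro rfl; simp [hgh] at hpos
    have hdeg : f.natDegree = g.natDegree + h.natDegree := hgh ▸ natDegree_mul hg hh
    rcases H g h hgh with hle | hle
    · exact .inr (hf.isUnit_of_dvd_of_natDegree_eq_zero ⟨g, hgh.trans (mul_comm g h)⟩ (by omega))
    · exact .inl (hf.isUnit_of_dvd_of_natDegree_eq_zero ⟨h, hgh⟩ (by omega))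

end Polynomial

theorem dumas_with_monotone_coefficients_general (p : ℕ) (hp : p.Prime) (f : Polynomial ℤ) (n : ℕ)
    (hn : f.natDegree = n) (hprim : f.IsPrimitive) (j ℓ : ℕ)
    (hℓj : ℓ + 1 ≤ j)
    (h1 : ¬ (p : ℤ) ∣ f.coeff j)
    (h2 : ∀ i, i < j → i ≠ ℓ → f.coeff i ≠ 0 →
      padicValInt p (f.coeff ℓ) * (j - i) < padicValInt p (f.coeff i) * (j - ℓ))
    (h3 : Nat.gcd (padicValInt p (f.coeff ℓ)) (j - ℓ) = 1) :
    (j = n ∧ ℓ = 0 → Irreducible f) ∧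
    (∀ f₁ f₂ : Polynomial ℤ, f = f₁ * f₂ →
      j - ℓ ≤ f₁.natDegree ∨ j - ℓ ≤ f₂.natDegree) := by
  have : Fact p.Prime := ⟨hp⟩
  have hfactor : ∀ f₁ f₂ : Polynomial ℤ, f = f₁ * f₂ →
      j - ℓ ≤ f₁.natDegree ∨ j - ℓ ≤ f₂.natDegree := fun _ _ hf =>
    le_natDegree_or_le_natDegree_of_dumas hf hℓj h1 h2 h3
  refine ⟨?_, hfactor⟩
  rintro ⟨rfl, rfl⟩
  subst hn
  exact hprim.irreducible_of_forall_le_natDegree (by omega) (by simpa using hfactor)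

/-- Theorem 1 combined with Remark (3): under the Dumas-type conditions together
with decreasing positive coefficients and no zero on the unit circle, f is
irreducible when j = n and ℓ = 0, and in general any factorization has a factor
of degree at least j - ℓ. -/
theorem dumas_with_monotone_coefficients (p : ℕ) (hp : p.Prime) (f : Polynomial ℤ) (n : ℕ)
    (hn : f.natDegree = n) (hprim : f.IsPrimitive) (j ℓ : ℕ)
    (hℓj : ℓ + 1 ≤ j) (hjn : j ≤ n)
    (h1 : ¬ (p : ℤ) ∣ f.coeff j)
    (h2 : ∀ i, i < j → i ≠ ℓ → f.coeff i ≠ 0 →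
      padicValInt p (f.coeff ℓ) * (j - i) < padicValInt p (f.coeff i) * (j - ℓ))
    (h3 : Nat.gcd (padicValInt p (f.coeff ℓ)) (j - ℓ) = 1)
    (hmono : ∀ i, i < n → f.coeff (i + 1) ≤ f.coeff i)
    (hlead : 1 ≤ f.coeff n)
    (hcircle : ∀ θ : ℂ, Polynomial.aeval θ f = 0 → ‖θ‖ ≠ 1) :
    (j = n ∧ ℓ = 0 → Irreducible f) ∧
    (∀ f₁ f₂ : Polynomial ℤ, f = f₁ * f₂ →
      j - ℓ ≤ f₁.natDegree ∨ j - ℓ ≤ f₂.natDegree) :=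
  dumas_with_monotone_coefficients_general p hp f n hn hprim j ℓ hℓj h1 h2 h3
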